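/- Let p-values p1,...,pn consist of n0 ≥ 1 true p-values that are i.i.d. uniform(0,1) and independent of the remaining (arbitrary) false p-values. For the BH step-up test with critical values α_{i:n} = (i/n)α, α ∈ (0,1), let R be the number of rejections and V the number of rejected true p-values. Then E[V / max(R,1)] = (n0/n)·α. -/

import Mathlib

/-!
For a true null `i`, let `R⁽ⁱ⁾` be the number of BH rejections once `p_i` is replaced by `0`.
It is at least `1` and depends on the other p-values only. If `p_i > 0`, then `p_i` is
rejected iff `p_i ≤ α R⁽ⁱ⁾ / n`, and in that case `R = R⁽ⁱ⁾`. Hence almost surely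
`V / max(R, 1) = ∑_{i true} 1{p_i ≤ α R⁽ⁱ⁾ / n} / R⁽ⁱ⁾`, and since `p_i` is uniform and
independent of `R⁽ⁱ⁾`, each summand has expectation `(α R⁽ⁱ⁾ / n) / R⁽ⁱ⁾ = α / n`.
-/

open MeasureTheory ProbabilityTheory Finset
open scoped Classical

/-- number of p-values `≤ t`. -/
noncomputable def countLe {n : ℕ} (p : Fin n → ℝ) (t : ℝ) : ℕ :=
  (Finset.univ.filter fun i => p i ≤ t).card

/-- step-up rejection count: `c i` is the `(i+1)`-th critical value; for nondecreasing
critical values this equals `max {k : p_{k:n} ≤ c_{k:n}}` (with `max ∅ = 0`). -/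
noncomputable def suCount {n : ℕ} (c : Fin n → ℝ) (p : Fin n → ℝ) : ℕ :=
  (Finset.univ.filter fun k : Fin n => k.1 + 1 ≤ countLe p (c k)).sup fun k => k.1 + 1

/-- step-down rejection count. -/
noncomputable def sdCount {n : ℕ} (c : Fin n → ℝ) (p : Fin n → ℝ) : ℕ :=
  (Finset.univ.filter fun k : Fin n =>
    ∀ j : Fin n, j ≤ k → j.1 + 1 ≤ countLe p (c j)).sup fun k => k.1 + 1

/-- the critical value `c_{R:n}`, with the convention `c_{0:n} = 0`. -/
noncomputable def threshold {n : ℕ} (c : Fin n → ℝ) (R : ℕ) : ℝ :=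
  if h : 0 < R ∧ R ≤ n then c ⟨R - 1, by omega⟩ else 0

/-- the σ-algebra generated by `(F̂_n(t))_{t ≥ λ}`. -/
noncomputable def ecdfSigma {Ω : Type*} [MeasurableSpace Ω] {n : ℕ}
    (p : Fin n → Ω → ℝ) (lam : ℝ) : MeasurableSpace Ω :=
  MeasurableSpace.comap
    (fun ω => fun t : Set.Ici lam => (countLe (fun i => p i ω) (t : ℝ) : ℝ))
    MeasurableSpace.pi

section StepUp

variable {n : ℕ} {c p : Fin n → ℝ}

lemma countLe_antitone (t : ℝ) : Antitone fun p : Fin n → ℝ => countLe p t := fun _ _ h =>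
  card_le_card fun j hj => by
    simp only [mem_filter, mem_univ, true_and] at hj ⊢
    exact (h j).trans hj

lemma countLe_update_of_le {i : Fin n} {x t : ℝ} (hx : x ≤ t) (hpi : p i ≤ t) :
    countLe (Function.update p i x) t = countLe p t := by
  unfold countLe
  congr 1
  refine filter_congr fun j _ => ?_
  rcases eq_or_ne j i with rfl | hji
  · simp [hx, hpi]
  · simp [hji]

lemma suCount_le : suCount c p ≤ n :=
  Finset.sup_le fun k _ => k.2

lemma le_suCount {k : Fin n} (h : k.1 + 1 ≤ countLe p (c k)) : k.1 + 1 ≤ suCount c p :=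
  le_sup (f := fun k : Fin n => k.1 + 1) (by simpa using h)

lemma exists_suCount_eq (h : 0 < suCount c p) :
    ∃ k : Fin n, k.1 + 1 = suCount c p ∧ k.1 + 1 ≤ countLe p (c k) := by
  have hne : (univ.filter fun k : Fin n => k.1 + 1 ≤ countLe p (c k)).Nonempty := by
    by_contra hne
    rw [not_nonempty_iff_eq_empty] at hne
    rw [suCount, hne, sup_empty] at h
    exact h.ne rfl
  obtain ⟨k, hk, hsup⟩ := exists_mem_eq_sup _ hne fun k : Fin n => k.1 + 1
  exact ⟨k, hsup.symm, (mem_filter.1 hk).2⟩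

lemma suCount_antitone : Antitone (suCount c) := fun _ _ h =>
  Finset.sup_le fun _ hk => le_suCount <| (mem_filter.1 hk).2.trans (countLe_antitone _ h)

lemma threshold_zero : threshold c 0 = 0 := by
  simp [threshold]

lemma threshold_succ (k : Fin n) : threshold c (k.1 + 1) = c k := by
  simp [threshold, Nat.succ_le_of_lt k.2]

lemma one_le_suCount_update_zero (hc : ∀ k, 0 ≤ c k) (i : Fin n) :
    1 ≤ suCount c (Function.update p i 0) :=
  le_suCount (k := ⟨0, i.pos⟩) <| card_pos.2 ⟨i, by simp [hc]⟩

lemma update_zero_le {i : Fin n} (hpi : 0 ≤ p i) : Function.update p i 0 ≤ p := by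
  intro j
  rcases eq_or_ne j i with rfl | hji
  · simpa using hpi
  · simp [hji]

lemma suCount_eq_of_le_threshold_suCount_update_zero {i : Fin n} (hpi : 0 < p i)
    (h : p i ≤ threshold c (suCount c (Function.update p i 0))) :
    suCount c p = suCount c (Function.update p i 0) := by
  refine le_antisymm (suCount_antitone (update_zero_le hpi.le)) ?_
  rcases Nat.eq_zero_or_pos (suCount c (Function.update p i 0)) with h0 | hpos
  · rw [h0, threshold_zero] at h; exact absurd h hpi.not_ge
  obtain ⟨k, hk, hkle⟩ := exists_suCount_eq hpos
  rw [← hk, threshold_succ] at h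
  rw [← hk]
  exact le_suCount <| hkle.trans_eq (countLe_update_of_le (hpi.le.trans h) h)

lemma suCount_eq_of_le_threshold_suCount (hc : Monotone c) {i : Fin n} (hpi : 0 < p i)
    (h : p i ≤ threshold c (suCount c p)) :
    suCount c p = suCount c (Function.update p i 0) := by
  refine le_antisymm (suCount_antitone (update_zero_le hpi.le)) ?_
  rcases Nat.eq_zero_or_pos (suCount c p) with h0 | hpos
  · rw [h0, threshold_zero] at h; exact absurd h hpi.not_ge
  obtain ⟨k₀, hk₀, -⟩ := exists_suCount_eq hpos
  rw [← hk₀, threshold_succ] at h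
  refine Finset.sup_le fun k hk => ?_
  rcases le_or_gt k k₀ with hkk₀ | hk₀k
  · rw [← hk₀]; exact Nat.succ_le_succ hkk₀
  · have hpk : p i ≤ c k := h.trans (hc hk₀k.le)
    refine le_suCount ?_
    rw [← countLe_update_of_le (hpi.le.trans hpk) hpk]
    exact (mem_filter.1 hk).2

lemma ite_div_max_suCount_eq (hc : Monotone c) (hc₀ : ∀ k, 0 ≤ c k) {i : Fin n}
    (hpi : 0 < p i) :
    (if p i ≤ threshold c (suCount c p) then (1 : ℝ) else 0) / (max (suCount c p) 1 : ℕ) =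
      (if p i ≤ threshold c (suCount c (Function.update p i 0)) then (1 : ℝ) else 0) /
        (suCount c (Function.update p i 0) : ℕ) := by
  by_cases h : p i ≤ threshold c (suCount c (Function.update p i 0))
  · rw [suCount_eq_of_le_threshold_suCount_update_zero hpi h,
      max_eq_left (one_le_suCount_update_zero hc₀ i)]
  · have h' : ¬ p i ≤ threshold c (suCount c p) := fun h' =>
      h (suCount_eq_of_le_threshold_suCount hc hpi h' ▸ h')
    simp [h, h']

lemma measurable_countLe (t : ℝ) : Measurable fun p : Fin n → ℝ => countLe p t := by
  simp_rw [countLe, card_filter]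
  exact Finset.measurable_sum _ fun i _ =>
    Measurable.ite (measurableSet_le (measurable_pi_apply i) measurable_const)
      measurable_const measurable_const

lemma measurable_suCount (c : Fin n → ℝ) : Measurable fun p : Fin n → ℝ => suCount c p :=
  (measurable_of_countable fun v : Fin n → ℕ =>
      (univ.filter fun k : Fin n => k.1 + 1 ≤ v k).sup fun k => k.1 + 1).comp
    (measurable_pi_lambda _ fun k => measurable_countLe (c k))

end StepUp

noncomputable def bhCritical (n : ℕ) (a : ℝ) : Fin n → ℝ :=
  fun k => (k.1 + 1 : ℝ) / n * a

noncomputable def bhFdpTerm (n : ℕ) (a : ℝ) (p : Fin n → ℝ) (i : Fin n) : ℝ :=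
  (if p i ≤ (suCount (bhCritical n a) p : ℝ) / n * a then 1 else 0) /
    (max (suCount (bhCritical n a) p) 1 : ℕ)

section BH

variable {n : ℕ} {a : ℝ}

lemma bhCritical_nonneg (ha : 0 ≤ a) (k : Fin n) : 0 ≤ bhCritical n a k := by
  unfold bhCritical; positivity

lemma bhCritical_monotone (ha : 0 ≤ a) : Monotone (bhCritical n a) := fun k l hkl => by
  unfold bhCritical
  gcongr
  exact_mod_cast hkl

lemma threshold_bhCritical {R : ℕ} (hR : R ≤ n) : threshold (bhCritical n a) R = R / n * a := by
  rcases R with _ | k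
  · simp [threshold_zero]
  · rw [threshold_succ ⟨k, hR⟩]
    simp [bhCritical]

lemma measurable_bhFdpTerm (i : Fin n) : Measurable fun p => bhFdpTerm n a p i := by
  have hR : Measurable fun p : Fin n → ℝ => (suCount (bhCritical n a) p : ℝ) :=
    measurable_from_top.comp (measurable_suCount _)
  have hM : Measurable fun p : Fin n → ℝ => ((max (suCount (bhCritical n a) p) 1 : ℕ) : ℝ) :=
    (measurable_from_top (f := fun k : ℕ => ((max k 1 : ℕ) : ℝ))).comp (measurable_suCount _)
  exact (Measurable.ite
    (measurableSet_le (measurable_pi_apply i) ((hR.div_const _).mul_const _))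
    measurable_const measurable_const).div hM

lemma norm_bhFdpTerm_le_one (p : Fin n → ℝ) (i : Fin n) : ‖bhFdpTerm n a p i‖ ≤ 1 := by
  have h : (1 : ℝ) ≤ (max (suCount (bhCritical n a) p) 1 : ℕ) := by
    exact_mod_cast le_max_right _ _
  unfold bhFdpTerm
  split_ifs
  · rw [norm_div, norm_one, Real.norm_of_nonneg (by positivity)]
    exact (div_le_one (by positivity)).2 h
  · simp

end BH

lemma measureReal_restrict_Ioo_zero_one_Iic {t : ℝ} (ht : t ∈ Set.Icc 0 1) :
    (volume.restrict (Set.Ioo (0 : ℝ) 1)).real (Set.Iic t) = t := by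
  have hsub : Set.Ioo 0 t ⊆ Set.Iic t ∩ Set.Ioo 0 1 := fun x hx =>
    ⟨hx.2.le, hx.1, hx.2.trans_le ht.2⟩
  have hsup : Set.Iic t ∩ Set.Ioo 0 1 ⊆ Set.Ioc 0 t := fun x hx => ⟨hx.2.1, hx.1⟩
  have : volume (Set.Iic t ∩ Set.Ioo (0 : ℝ) 1) = ENNReal.ofReal t := le_antisymm
    ((measure_mono hsup).trans_eq (by simp)) ((le_of_eq (by simp)).trans (measure_mono hsub))
  rw [measureReal_def, Measure.restrict_apply measurableSet_Iic, this, ENNReal.toReal_ofReal ht.1]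

lemma integral_ite_le_of_indepFun_uniform {Ω E : Type*} [MeasurableSpace Ω] [MeasurableSpace E]
    {μ : Measure Ω} [IsFiniteMeasure μ] {X : Ω → ℝ} {Y : Ω → E}
    (hX : Measurable X) (hY : Measurable Y) (hXY : IndepFun X Y μ)
    (hlaw : μ.map X = volume.restrict (Set.Ioo 0 1)) {t g : E → ℝ} (ht : Measurable t)
    (hg : Measurable g) (ht01 : ∀ y, t y ∈ Set.Icc 0 1) (hgY : Integrable (fun ω => g (Y ω)) μ) :
    ∫ ω, (if X ω ≤ t (Y ω) then g (Y ω) else 0) ∂μ = ∫ ω, t (Y ω) * g (Y ω) ∂μ := by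
  let F : E × ℝ → ℝ := fun z => if z.2 ≤ t z.1 then g z.1 else 0
  have hF : Measurable F :=
    Measurable.ite (measurableSet_le measurable_snd (ht.comp measurable_fst))
      (hg.comp measurable_fst) measurable_const
  have hFint : Integrable F ((μ.map Y).prod (μ.map X)) := by
    refine (((integrable_map_measure hg.aestronglyMeasurable hY.aemeasurable).2 hgY).comp_fst
      (μ.map X)).mono hF.aestronglyMeasurable (ae_of_all _ fun z => ?_)
    by_cases h : z.2 ≤ t z.1 <;> simp [F, h]
  have hinner : ∀ y, ∫ x, F (y, x) ∂(μ.map X) = t y * g y := by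
    intro y
    have : (fun x => F (y, x)) = (Set.Iic (t y)).indicator fun _ => g y := by
      funext x; simp [F, Set.indicator]
    rw [this, integral_indicator_const _ measurableSet_Iic, hlaw,
      measureReal_restrict_Ioo_zero_one_Iic (ht01 y), smul_eq_mul]
  calc ∫ ω, (if X ω ≤ t (Y ω) then g (Y ω) else 0) ∂μ
      = ∫ z, F z ∂(μ.map fun ω => (Y ω, X ω)) :=
        (integral_map (hY.prodMk hX).aemeasurable hF.aestronglyMeasurable).symm
    _ = ∫ y, t y * g y ∂(μ.map Y) := by
        rw [hXY.symm.map_prod_eq_prod_map_map hY.aemeasurable hX.aemeasurable,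
          integral_prod F hFint]
        simp only [hinner]
    _ = ∫ ω, t (Y ω) * g (Y ω) ∂μ :=
        integral_map hY.aemeasurable (ht.mul hg).aestronglyMeasurable

lemma ProbabilityTheory.IndepFun.indepFun_prodMk_of_indepFun_prodMk {Ω α β γ : Type*}
    [MeasurableSpace Ω] [MeasurableSpace α] [MeasurableSpace β] [MeasurableSpace γ]
    {μ : Measure Ω} [IsFiniteMeasure μ] {X : Ω → α} {Y : Ω → β} {Z : Ω → γ}
    (hX : Measurable X) (hY : Measurable Y) (hZ : Measurable Z)
    (hXY : IndepFun X Y μ) (hXYZ : IndepFun (fun ω => (X ω, Y ω)) Z μ) :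
    IndepFun X (fun ω => (Y ω, Z ω)) μ := by
  have hYZ : IndepFun Y Z μ := hXYZ.comp measurable_snd measurable_id
  rw [indepFun_iff_map_prod_eq_prod_map_map hX.aemeasurable (hY.prodMk hZ).aemeasurable,
    hYZ.map_prod_eq_prod_map_map hY.aemeasurable hZ.aemeasurable]
  calc μ.map (fun ω => (X ω, Y ω, Z ω))
      = (μ.map (fun ω => ((X ω, Y ω), Z ω))).map MeasurableEquiv.prodAssoc := by
        rw [Measure.map_map MeasurableEquiv.prodAssoc.measurable ((hX.prodMk hY).prodMk hZ)]
        rfl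
    _ = (((μ.map X).prod (μ.map Y)).prod (μ.map Z)).map MeasurableEquiv.prodAssoc := by
        rw [hXYZ.map_prod_eq_prod_map_map (hX.prodMk hY).aemeasurable hZ.aemeasurable,
          hXY.map_prod_eq_prod_map_map hX.aemeasurable hY.aemeasurable]
    _ = (μ.map X).prod ((μ.map Y).prod (μ.map Z)) := Measure.prodAssoc_prod

lemma indepFun_update_zero {Ω : Type*} [MeasurableSpace Ω] {μ : Measure Ω}
    [IsZeroOrProbabilityMeasure μ] {n : ℕ} (H : Fin n → Bool) {U ξ : Fin n → Ω → ℝ}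
    (hU : ∀ i, Measurable (U i)) (hξ : ∀ i, Measurable (ξ i)) (hUindep : iIndepFun U μ)
    (hUξ : IndepFun (fun ω i => U i ω) (fun ω i => ξ i ω) μ) {i : Fin n} (hi : H i = false) :
    IndepFun (U i)
      (fun ω => Function.update (fun j => if H j then ξ j ω else U j ω) i 0) μ := by
  -- `U i ⊥ Y` and `(U i, Y) ⊥ ξ`, while the zeroed p-value vector is a function of `(Y, ξ)`.
  let Y : Ω → Fin n → ℝ := fun ω => Function.update (fun j => U j ω) i 0
  have hUvec : Measurable fun ω j => U j ω := measurable_pi_lambda _ hU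
  have hY : Measurable Y := measurable_update_left.comp hUvec
  have hUY : IndepFun (U i) Y μ := by
    have hψ : Measurable fun (v : ({i}ᶜ : Finset (Fin n)) → ℝ) (j : Fin n) =>
        if h : j = i then 0 else v ⟨j, by simpa using h⟩ := by
      refine measurable_pi_lambda _ fun j => ?_
      by_cases h : j = i <;> simp only [h, dite_true, dite_false]
      exacts [measurable_const, measurable_pi_apply _]
    convert (hUindep.indepFun_finset {i} {i}ᶜ disjoint_compl_right hU).comp
      (measurable_pi_apply ⟨i, mem_singleton_self i⟩) hψ using 1
    · rfl
    funext ω j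
    by_cases h : j = i
    · subst h; simp [Y]
    · simp [Y, h]
  have hξvec : Measurable fun ω j => ξ j ω := measurable_pi_lambda _ hξ
  have hUYξ : IndepFun (fun ω => (U i ω, Y ω)) (fun ω j => ξ j ω) μ :=
    hUξ.comp (φ := fun v => (v i, Function.update v i 0)) (by fun_prop) measurable_id
  have hG : Measurable fun (yx : (Fin n → ℝ) × (Fin n → ℝ)) j =>
      if H j then yx.2 j else yx.1 j := by
    refine measurable_pi_lambda _ fun j => ?_
    cases H j <;> simp only [Bool.false_eq_true, if_true, if_false] <;> fun_prop
  convert ((hUY.indepFun_prodMk_of_indepFun_prodMk (hU i) hY hξvec hUYξ).comp measurable_id hG)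
    using 1
  · rfl
  funext ω j
  by_cases h : j = i
  · subst h; simp [Y, hi]
  · simp [Y, h]

lemma integrable_bhFdpTerm {Ω : Type*} [MeasurableSpace Ω] {μ : Measure Ω}
    [IsFiniteMeasure μ] {n : ℕ} {a : ℝ} {p : Ω → Fin n → ℝ} (hp : Measurable p)
    (i : Fin n) : Integrable (fun ω => bhFdpTerm n a (p ω) i) μ :=
  .of_bound ((measurable_bhFdpTerm i).comp hp).aestronglyMeasurable 1
    (ae_of_all _ fun _ => norm_bhFdpTerm_le_one _ i)

theorem integral_bhFdpTerm {Ω : Type*} [MeasurableSpace Ω] {μ : Measure Ω}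
    [IsProbabilityMeasure μ] {n : ℕ} {a : ℝ} (ha : a ∈ Set.Icc 0 1) {p : Ω → Fin n → ℝ}
    (hp : Measurable p) {i : Fin n}
    (hlaw : μ.map (fun ω => p ω i) = volume.restrict (Set.Ioo 0 1))
    (hind : IndepFun (fun ω => p ω i) (fun ω => Function.update (p ω) i 0) μ) :
    ∫ ω, bhFdpTerm n a (p ω) i ∂μ = a / n := by
  let r : (Fin n → ℝ) → ℕ := fun y => suCount (bhCritical n a) (Function.update y i 0)
  have hr₁ : ∀ y, (1 : ℝ) ≤ r y := fun y => by
    exact_mod_cast one_le_suCount_update_zero (bhCritical_nonneg ha.1) i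
  have hrn : ∀ y, (r y : ℝ) ≤ n := fun y => by exact_mod_cast suCount_le
  have hr : Measurable fun y => (r y : ℝ) :=
    measurable_from_top.comp ((measurable_suCount _).comp measurable_update_left)
  have hpi : Measurable fun ω => p ω i := measurable_pi_iff.1 hp i
  have hpos : ∀ᵐ ω ∂μ, 0 < p ω i := by
    refine ae_of_ae_map hpi.aemeasurable ?_
    rw [hlaw]
    exact (ae_restrict_mem measurableSet_Ioo).mono fun x hx => hx.1
  have hterm : (fun ω => bhFdpTerm n a (p ω) i) =ᵐ[μ] fun ω =>
      if p ω i ≤ r (Function.update (p ω) i 0) / n * a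
        then 1 / (r (Function.update (p ω) i 0) : ℝ) else 0 := by
    filter_upwards [hpos] with ω hω
    rw [bhFdpTerm, ← threshold_bhCritical suCount_le,
      ite_div_max_suCount_eq (bhCritical_monotone ha.1) (bhCritical_nonneg ha.1) hω,
      threshold_bhCritical suCount_le]
    simp [r, ite_div]
  have ht : ∀ y, (r y : ℝ) / n * a ∈ Set.Icc 0 1 := fun y =>
    ⟨mul_nonneg (by positivity) ha.1,
      mul_le_one₀ (div_le_one_of_le₀ (hrn y) n.cast_nonneg) ha.1 ha.2⟩
  have hY : Measurable fun ω => Function.update (p ω) i 0 := measurable_update_left.comp hp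
  have hgY : Integrable (fun ω => 1 / (r (Function.update (p ω) i 0) : ℝ)) μ := by
    refine .of_bound (measurable_const.div (hr.comp hY)).aestronglyMeasurable 1
      (ae_of_all _ fun ω => ?_)
    rw [norm_div, norm_one, Real.norm_of_nonneg (by positivity)]
    exact (div_le_one (zero_lt_one.trans_le (hr₁ _))).2 (hr₁ _)
  have hprod : ∀ y, (r y : ℝ) / n * a * (1 / r y) = a / n := fun y => by
    have := (zero_lt_one.trans_le (hr₁ y)).ne'
    field_simp
  rw [integral_congr_ae hterm, integral_ite_le_of_indepFun_uniform
    (t := fun y => (r y : ℝ) / n * a) (g := fun y => 1 / (r y : ℝ)) hpi hY hind hlaw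
    ((hr.div_const _).mul_const _) (measurable_const.div hr) ht hgY]
  simp only [hprod]
  simp

theorem bh_fdr_exact_general {Ω : Type*} [MeasurableSpace Ω]
    (μ : Measure Ω) [IsProbabilityMeasure μ] {m : ℕ}
    (H : Fin (m + 1) → Bool) (U ξ : Fin (m + 1) → Ω → ℝ)
    (hUmeas : ∀ i, Measurable (U i)) (hξmeas : ∀ i, Measurable (ξ i))
    (hUindep : iIndepFun U μ)
    (hUξ : IndepFun (fun ω => fun i => U i ω) (fun ω => fun i => ξ i ω) μ)
    (hunif : ∀ i, Measure.map (U i) μ = volume.restrict (Set.Ioo (0 : ℝ) 1))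
    (a : ℝ) (ha : a ∈ Set.Ioo (0 : ℝ) 1) :
    ∫ ω,
        (((Finset.univ.filter fun i : Fin (m + 1) =>
            (if H i then ξ i ω else U i ω) ≤
              (suCount (fun k : Fin (m + 1) => ((k.1 + 1 : ℝ) / (m + 1)) * a)
                  (fun i => if H i then ξ i ω else U i ω) : ℝ) / (m + 1) * a
            ∧ H i = false).card : ℝ)
          / (max (suCount (fun k : Fin (m + 1) => ((k.1 + 1 : ℝ) / (m + 1)) * a)
              (fun i => if H i then ξ i ω else U i ω)) 1 : ℕ)) ∂μ
      = ((Finset.univ.filter fun i => H i = false).card : ℝ) / (m + 1) * a := by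
  let p : Ω → Fin (m + 1) → ℝ := fun ω i => if H i then ξ i ω else U i ω
  have hp : Measurable p := measurable_pi_lambda _ fun i => by
    cases h : H i <;> simp [p, h, hUmeas, hξmeas]
  have hnull : ∀ i ∈ univ.filter (H · = false),
      ∫ ω, bhFdpTerm (m + 1) a (p ω) i ∂μ = a / (m + 1 : ℕ) := fun i hi => by
    have hi : H i = false := (mem_filter.1 hi).2
    refine integral_bhFdpTerm ⟨ha.1.le, ha.2.le⟩ hp ?_ ?_
    · simpa [p, hi] using hunif i
    · simpa [p, hi] using indepFun_update_zero H hUmeas hξmeas hUindep hUξ hi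
  have hc : bhCritical (m + 1) a = fun k : Fin (m + 1) => ((k.1 + 1 : ℝ) / (m + 1)) * a := by
    funext k; simp [bhCritical]
  trans ∫ ω, ∑ i ∈ univ.filter (H · = false), bhFdpTerm (m + 1) a (p ω) i ∂μ
  · congr 1
    funext ω
    simp only [bhFdpTerm, hc, Nat.cast_add, Nat.cast_one, ← sum_div]
    congr 1
    rw [sum_boole, filter_filter]
    simp only [and_comm, p]
  rw [integral_finsetSum _ fun i _ => integrable_bhFdpTerm hp i, sum_congr rfl hnull, sum_const,
    nsmul_eq_mul]
  push_cast
  ring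

/-- Exact BH FDR formula: with `n0 ≥ 1` true p-values that are i.i.d. uniform(0,1) and
independent of the remaining (arbitrary) false p-values, the BH step-up test at level
`α ∈ (0,1)` has `E[V / max(R,1)] = (n0/n)·α`.  Here `H i = false` marks a true null
hypothesis, `p i = if H i then ξ i else U i`. -/
theorem bh_fdr_exact {Ω : Type*} [MeasurableSpace Ω]
    (μ : Measure Ω) [IsProbabilityMeasure μ] {m : ℕ}
    (H : Fin (m + 1) → Bool) (U ξ : Fin (m + 1) → Ω → ℝ)
    (hUmeas : ∀ i, Measurable (U i)) (hξmeas : ∀ i, Measurable (ξ i))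
    (hUindep : iIndepFun U μ)
    (hUξ : IndepFun (fun ω => fun i => U i ω) (fun ω => fun i => ξ i ω) μ)
    (hunif : ∀ i, Measure.map (U i) μ = volume.restrict (Set.Ioo (0 : ℝ) 1))
    (hξrange : ∀ i ω, ξ i ω ∈ Set.Icc (0 : ℝ) 1)
    (hn0 : 1 ≤ (Finset.univ.filter fun i => H i = false).card)
    (a : ℝ) (ha : a ∈ Set.Ioo (0 : ℝ) 1) :
    ∫ ω,
        (((Finset.univ.filter fun i : Fin (m + 1) =>
            (if H i then ξ i ω else U i ω) ≤
              (suCount (fun k : Fin (m + 1) => ((k.1 + 1 : ℝ) / (m + 1)) * a)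
                  (fun i => if H i then ξ i ω else U i ω) : ℝ) / (m + 1) * a
            ∧ H i = false).card : ℝ)
          / (max (suCount (fun k : Fin (m + 1) => ((k.1 + 1 : ℝ) / (m + 1)) * a)
              (fun i => if H i then ξ i ω else U i ω)) 1 : ℕ)) ∂μ
      = ((Finset.univ.filter fun i => H i = false).card : ℝ) / (m + 1) * a :=
  bh_fdr_exact_general μ H U ξ hUmeas hξmeas hUindep hUξ hunif a ha
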